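/- arXiv:1109.2776 — 2 statements merged into one kernel-verified Lean document; each statement's English description precedes it below -/
import Mathlib

section
/- Let n ≥ 4 and L > 2n be integers, and let S ⊆ Λ_L satisfy |S| = n² and meet every column of the torus (for every k ∈ ZMod L there is j ∈ ZMod L with (k,j) ∈ S). Then e(S) ≤ 2n² − L; in particular e(S) < 2n(n−1), so no configuration wrapping around the torus achieves the minimal energy. -/
open scoped Classical

noncomputable section

/-- A site of the discrete torus `Λ_L`. -/
abbrev Site (L : ℕ) := ZMod L × ZMod L

/-- Two sites of the discrete torus are adjacent if their difference is a unit vector. -/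
def torusAdj (L : ℕ) (u v : Site L) : Prop :=
  u - v = (1, 0) ∨ u - v = (-1, 0) ∨ u - v = (0, 1) ∨ u - v = (0, -1)

/-- `e(S)`: the number of unordered pairs of adjacent sites contained in `S`. -/
def torusE (L : ℕ) (S : Finset (Site L)) : ℕ :=
  ((S ×ˢ S).filter fun p => torusAdj L p.1 p.2).card / 2


/-!
Count bonds line by line. On the cycle `ZMod L`, a nonempty proper subset `T` spans at most
`|T| - 1` bonds and the full cycle spans `L`. As `S` meets every column, its vertical bonds number
at most `|S| - L + F'`, where `F'` counts the full columns; if `F' = 0` this already gives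
`e(S) ≤ 2|S| - L`. Otherwise a full column meets every row, so the horizontal bonds number at most
`|S| - L + F` as well. Each full line holds `L` sites, so `(F + F') L ≤ 2n² < nL`, whence
`F + F' < n < L` and `e(S) ≤ 2n² - 2L + F + F' < 2n² - L`.
-/

open Finset

section Bonds

variable {G : Type*} [AddCommGroup G] [DecidableEq G]

def bonds (S : Finset G) (d : G) : Finset G := S.filter fun u => u - d ∈ S

theorem card_bonds_le (S : Finset G) (d : G) : #(bonds S d) ≤ #S := card_filter_le _ _

theorem card_filter_sub_eq (S : Finset G) (d : G) :
    #((S ×ˢ S).filter fun p => p.1 - p.2 = d) = #(bonds S d) := by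
  refine card_nbij' Prod.fst (fun u => (u, u - d)) ?_ ?_ ?_ (fun _ _ => rfl)
  all_goals
    intro x hx
    aesop (add norm bonds)

theorem card_filter_sub_eq_neg (S : Finset G) (d : G) :
    #((S ×ˢ S).filter fun p => p.1 - p.2 = -d) = #((S ×ˢ S).filter fun p => p.1 - p.2 = d) := by
  refine card_nbij' Prod.swap Prod.swap ?_ ?_ (fun p _ => p.swap_swap) (fun p _ => p.swap_swap)
  all_goals
    rintro ⟨u, v⟩ h
    simp only [coe_filter, mem_product, Set.mem_ofPred_eq, Prod.swap_prod_mk] at h ⊢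
    exact ⟨h.1.symm, by grind⟩

theorem card_bonds_map {H : Type*} [AddCommGroup H] [DecidableEq H] (φ : G ≃+ H)
    (S : Finset G) (d : G) :
    #(bonds (S.map φ.toEquiv.toEmbedding) (φ d)) = #(bonds S d) := by
  rw [← card_map φ.toEquiv.toEmbedding]
  congr 1
  ext u
  simp [bonds]

end Bonds

/-- Inequality rather than equality because for `L ≤ 2` some of the four directions coincide. -/
theorem torusE_le_card_bonds {L : ℕ} (S : Finset (Site L)) :
    torusE L S ≤ #(bonds S (1, 0)) + #(bonds S (0, 1)) := by
  set P : Site L → Finset (Site L × Site L) := fun d => (S ×ˢ S).filter fun p => p.1 - p.2 = d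
  have hsub : ((S ×ˢ S).filter fun p => torusAdj L p.1 p.2) ⊆
      P (1, 0) ∪ P (-(1, 0)) ∪ P (0, 1) ∪ P (-(0, 1)) := by
    intro p hp
    rw [mem_filter, torusAdj] at hp
    simp only [P, mem_union, mem_filter, Prod.neg_mk, neg_zero]
    tauto
  have hcard := card_le_card hsub
  have h₁ := card_union_le (P (1, 0) ∪ P (-(1, 0)) ∪ P (0, 1)) (P (-(0, 1)))
  have h₂ := card_union_le (P (1, 0) ∪ P (-(1, 0))) (P (0, 1))
  have h₃ := card_union_le (P (1, 0)) (P (-(1, 0)))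
  simp only [P, card_filter_sub_eq_neg, card_filter_sub_eq] at hcard h₁ h₂ h₃
  unfold torusE
  omega

theorem ZMod.eq_univ_of_sub_one_mem {L : ℕ} [NeZero L] {T : Finset (ZMod L)} (hT : T.Nonempty)
    (h : ∀ x ∈ T, x - 1 ∈ T) : T = univ := by
  obtain ⟨a, ha⟩ := hT
  have hsub : ∀ m : ℕ, a - m ∈ T := by
    intro m
    induction m with
    | zero => simpa using ha
    | succ m ih => simpa [sub_add_eq_sub_sub] using h _ ih
  refine eq_univ_of_forall fun y => ?_
  simpa using hsub (a - y).val

theorem card_bonds_one_add_one_le {L : ℕ} [NeZero L] {T : Finset (ZMod L)} (hT : T.Nonempty) :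
    #(bonds T 1) + 1 ≤ #T + if T = univ then 1 else 0 := by
  split_ifs with hfull
  · exact Nat.add_le_add_right (card_bonds_le T 1) 1
  · have hopen : ∃ x ∈ T, x - 1 ∉ T := by
      by_contra! hclosed
      exact hfull (ZMod.eq_univ_of_sub_one_mem hT hclosed)
    exact card_lt_card (filter_ssubset.mpr hopen : bonds T 1 ⊂ T)

section Columns

variable {A : Type*} [DecidableEq A] {L : ℕ} [NeZero L]

def column (S : Finset (A × ZMod L)) (k : A) : Finset (ZMod L) := univ.filter fun j => (k, j) ∈ S

theorem column_bonds [AddCommGroup A] (S : Finset (A × ZMod L)) (k : A) :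
    column (bonds S (0, 1)) k = bonds (column S k) 1 := by
  ext j
  simp [column, bonds]

variable [Fintype A]

def fullColumns (S : Finset (A × ZMod L)) : Finset A := univ.filter fun k => column S k = univ

theorem mem_of_mem_fullColumns {S : Finset (A × ZMod L)} {k : A} (hk : k ∈ fullColumns S)
    (j : ZMod L) : (k, j) ∈ S := by
  have hj : j ∈ column S k := by rw [(mem_filter.mp hk).2]; exact mem_univ j
  simpa [column] using hj

theorem card_eq_sum_card_column (S : Finset (A × ZMod L)) : #S = ∑ k, #(column S k) := by
  rw [card_eq_sum_card_fiberwise (f := Prod.fst) (t := univ) fun _ _ => mem_univ _]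
  refine sum_congr rfl fun k _ => card_nbij' Prod.snd (fun j => (k, j)) ?_ ?_ ?_ ?_
  all_goals
    intro x hx
    aesop (add norm column)

theorem card_fullColumns_mul_le (S : Finset (A × ZMod L)) : #(fullColumns S) * L ≤ #S := by
  have hfull : ∀ k ∈ fullColumns S, #(column S k) = L := fun k hk => by
    rw [(mem_filter.mp hk).2, card_univ, ZMod.card]
  calc #(fullColumns S) * L = ∑ k ∈ fullColumns S, #(column S k) := by
        rw [sum_congr rfl hfull, sum_const, smul_eq_mul]
    _ ≤ ∑ k, #(column S k) := sum_le_sum_of_subset (subset_univ _)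
    _ = #S := (card_eq_sum_card_column S).symm

theorem card_bonds_add_card_le [AddCommGroup A] (S : Finset (A × ZMod L))
    (hcol : ∀ k, ∃ j, (k, j) ∈ S) :
    #(bonds S (0, 1)) + Fintype.card A ≤ #S + #(fullColumns S) := by
  have hne : ∀ k, (column S k).Nonempty := fun k =>
    let ⟨j, hj⟩ := hcol k; ⟨j, by simpa [column] using hj⟩
  calc #(bonds S (0, 1)) + Fintype.card A = ∑ k, (#(bonds (column S k) 1) + 1) := by
        simp [sum_add_distrib, card_eq_sum_card_column (bonds S (0, 1)), column_bonds]
    _ ≤ ∑ k, (#(column S k) + if column S k = univ then 1 else 0) :=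
        sum_le_sum fun k _ => card_bonds_one_add_one_le (hne k)
    _ = #S + #(fullColumns S) := by
        rw [sum_add_distrib, sum_boole, card_eq_sum_card_column S, fullColumns]
        simp

end Columns

theorem torusE_add_le {n L : ℕ} (hL : 2 * n < L) (S : Finset (Site L)) (hcard : #S = n ^ 2)
    (hcol : ∀ k, ∃ j, (k, j) ∈ S) : torusE L S + L ≤ 2 * n ^ 2 := by
  have : NeZero L := ⟨by omega⟩
  have he := torusE_le_card_bonds S
  have hV := card_bonds_add_card_le S hcol
  have hFV := card_fullColumns_mul_le S
  rw [ZMod.card, hcard] at hV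
  rw [hcard] at hFV
  obtain hF' | ⟨k, hk⟩ := (fullColumns S).eq_empty_or_nonempty
  · have hH := card_bonds_le S (1, 0)
    rw [hF', card_empty] at hV
    omega
  · -- the rows of `S` are the columns of its transpose `S'`
    set φ : Site L ≃+ Site L := AddEquiv.prodComm
    set S' := S.map φ.toEquiv.toEmbedding
    have hrow : ∀ j, ∃ i, (j, i) ∈ S' := fun j =>
      ⟨k, mem_map_of_mem _ (mem_of_mem_fullColumns hk j)⟩
    have hH := card_bonds_add_card_le S' hrow
    have hFH := card_fullColumns_mul_le S'
    rw [card_map, show ((0, 1) : Site L) = φ (1, 0) from rfl, card_bonds_map, ZMod.card,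
      hcard] at hH
    rw [card_map, hcard] at hFH
    have hlt : (#(fullColumns S') + #(fullColumns S)) * L < n * L := by nlinarith
    have hfew := Nat.lt_of_mul_lt_mul_right hlt
    omega

theorem wrapping_configuration_bound_general (n L : ℕ) (hL : 2 * n < L)
    (S : Finset (Site L)) (hcard : S.card = n ^ 2)
    (hcol : ∀ k : ZMod L, ∃ j : ZMod L, (k, j) ∈ S) :
    (torusE L S : ℤ) ≤ 2 * (n : ℤ) ^ 2 - (L : ℤ) ∧ torusE L S < 2 * n * (n - 1) := by
  have key := torusE_add_le hL S hcard hcol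
  have hsq : 2 * n * (n - 1) + 2 * n = 2 * n ^ 2 := by
    cases n with
    | zero => rfl
    | succ m => simp only [Nat.add_sub_cancel]; ring
  have hkey : (torusE L S : ℤ) + L ≤ 2 * (n : ℤ) ^ 2 := by exact_mod_cast key
  omega

/-- for `n ≥ 4` and `L > 2n`, a configuration of `n²` particles which
meets every column of the torus satisfies `e(S) ≤ 2n² − L`; in particular
`e(S) < 2n(n−1)`, so it does not achieve the minimal energy. -/
theorem wrapping_configuration_bound (n L : ℕ) (hn : 4 ≤ n) (hL : 2 * n < L)
    (S : Finset (Site L)) (hcard : S.card = n ^ 2)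
    (hcol : ∀ k : ZMod L, ∃ j : ZMod L, (k, j) ∈ S) :
    (torusE L S : ℤ) ≤ 2 * (n : ℤ) ^ 2 - (L : ℤ) ∧ torusE L S < 2 * n * (n - 1) :=
  wrapping_configuration_bound_general n L hL S hcard hcol
end
end

section
/- Let n ≥ 4 and L > 2n be integers and fix x ∈ Λ_L. The set of configurations ξ such that ξ = σ^{u,v}η^x for some pair of adjacent sites u, v, ξ ≠ η^x, and H(ξ) = −2n(n−1) + 2, has exactly 8 elements (each of the 4 corner particles of the square moved to one of its 2 outward adjacent empty sites). -/
open scoped Classical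

noncomputable section

/-- A lattice-gas configuration on `Λ_L`. -/
abbrev Config (L : ℕ) := Site L → Bool

/-- The set of sites occupied by the configuration `η`. -/
def occupied (L : ℕ) [NeZero L] (η : Config L) : Finset (Site L) :=
  Finset.univ.filter fun x => η x = true

/-- The Hamiltonian `H(η) = −Σ η(x)η(y)` (sum over unordered pairs of adjacent sites),
i.e. minus the number of adjacent occupied pairs, as an integer. -/
def confH (L : ℕ) [NeZero L] (η : Config L) : ℤ :=
  -(torusE L (occupied L η) : ℤ)

/-- `σ^{u,v}η`: the configuration obtained from `η` by exchanging the occupation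
variables at `u` and `v`. -/
def swapConf (L : ℕ) (η : Config L) (u v : Site L) : Config L :=
  fun z => if z = u then η v else if z = v then η u else η z

/-- The occupied set `Q_x = x + {0,…,n−1}²` of the square configuration `η^x`. -/
def squareSet (L n : ℕ) (x : Site L) : Finset (Site L) :=
  (Finset.range n ×ˢ Finset.range n).image fun p => x + ((p.1 : ZMod L), (p.2 : ZMod L))

/-- The square configuration `η^x`, whose occupied set is `Q_x`. -/
def squareConf (L n : ℕ) (x : Site L) : Config L :=
  fun z => decide (z ∈ squareSet L n x)

/-! Embed the square `Q_x` into `ℤ²` as `{0,…,n-1}²`; since `L > n + 2`, the embedding is injective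
and preserves and reflects adjacency on the square together with its ring of outer neighbours, so
all counting can be done in `ℤ²`. An exchange changes `η^x` only if it moves a particle from some
`p ∈ Q` to an adjacent empty `q`, and then the number of adjacent occupied pairs drops by
`deg_Q p + 1 - deg_Q q`. Every empty site next to the square has exactly one occupied neighbour,
so the energy rises by `deg_Q p`, which is `2` exactly at the four corners (and `3` elsewhere on the
boundary). Each corner has two outward neighbours, and different moves give different
configurations because the new occupied set determines the emptied and the filled site. -/

open Finset

theorem Finset.image_erase_of_injOn {α β : Type*} [DecidableEq α] [DecidableEq β] {f : α → β}
    {s : Finset α} (hf : Set.InjOn f s) {a : α} (ha : a ∈ s) :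
    (s.erase a).image f = (s.image f).erase (f a) := by
  ext z
  simp only [mem_image, mem_erase]
  constructor
  · rintro ⟨t, ⟨hta, ht⟩, rfl⟩
    exact ⟨fun h => hta (hf ht ha h), t, ht, rfl⟩
  · rintro ⟨hz, t, ht, rfl⟩
    exact ⟨t, ⟨by rintro rfl; exact hz rfl, ht⟩, rfl⟩

section AdjPairs

variable {α β : Type*}

/-- Ordered pairs, so that `torusE L S = (adjPairs (torusAdj L) S).card / 2` by definition. -/
def adjPairs (r : α → α → Prop) (S : Finset α) : Finset (α × α) :=
  (S ×ˢ S).filter fun p => r p.1 p.2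

def degreeIn (r : α → α → Prop) (S : Finset α) (w : α) : ℕ :=
  (S.filter (r w)).card

theorem card_adjPairs_eq_sum_degreeIn (r : α → α → Prop) (S : Finset α) :
    (adjPairs r S).card = ∑ p ∈ S, degreeIn r S p := by
  simp only [adjPairs, degreeIn, card_filter, sum_product]

theorem card_adjPairs_image [DecidableEq β] {r : α → α → Prop} {s : β → β → Prop} {f : α → β}
    {T : Finset α} (hf : Set.InjOn f T) (hrs : ∀ p ∈ T, ∀ q ∈ T, s (f p) (f q) ↔ r p q) :
    (adjPairs s (T.image f)).card = (adjPairs r T).card := by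
  have himage : adjPairs s (T.image f) = (adjPairs r T).image (Prod.map f f) := by
    ext ⟨u, v⟩
    simp only [adjPairs, mem_filter, mem_product, mem_image, Prod.exists, Prod.map, Prod.mk.injEq]
    constructor
    · rintro ⟨⟨⟨p, hp, rfl⟩, ⟨q, hq, rfl⟩⟩, h⟩
      exact ⟨p, q, ⟨⟨hp, hq⟩, (hrs p hp q hq).1 h⟩, rfl, rfl⟩
    · rintro ⟨p, q, ⟨⟨hp, hq⟩, h⟩, rfl, rfl⟩
      exact ⟨⟨⟨p, hp, rfl⟩, ⟨q, hq, rfl⟩⟩, (hrs p hp q hq).2 h⟩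
  rw [himage, card_image_of_injOn]
  rintro ⟨p, q⟩ hpq ⟨p', q'⟩ hpq' h
  simp only [adjPairs, coe_filter, mem_product, Set.mem_ofPred_eq] at hpq hpq'
  simp only [Prod.map, Prod.mk.injEq] at h ⊢
  exact ⟨hf hpq.1.1 hpq'.1.1 h.1, hf hpq.1.2 hpq'.1.2 h.2⟩

variable [DecidableEq α] (G : SimpleGraph α)

theorem degreeIn_insert {S : Finset α} {v : α} (hv : v ∉ S) (w : α) :
    degreeIn G.Adj (insert v S) w = degreeIn G.Adj S w + if G.Adj w v then 1 else 0 := by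
  unfold degreeIn
  rw [filter_insert]
  split_ifs
  · exact card_insert_of_notMem fun hmem => hv (mem_of_mem_filter _ hmem)
  · rfl

theorem card_adjPairs_insert {S : Finset α} {v : α} (hv : v ∉ S) :
    (adjPairs G.Adj (insert v S)).card = (adjPairs G.Adj S).card + 2 * degreeIn G.Adj S v := by
  have hself : degreeIn G.Adj (insert v S) v = degreeIn G.Adj S v := by
    simp [degreeIn, filter_insert]
  have hback : ∑ p ∈ S, (if G.Adj p v then 1 else 0) = degreeIn G.Adj S v := by
    simp only [degreeIn, card_filter, G.adj_comm]
  rw [card_adjPairs_eq_sum_degreeIn, sum_insert hv, hself,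
    sum_congr rfl fun p _ => degreeIn_insert G hv p, sum_add_distrib, hback,
    ← card_adjPairs_eq_sum_degreeIn]
  ring

theorem card_adjPairs_insert_erase {S : Finset α} {u v : α} (hu : u ∈ S) (hv : v ∉ S)
    (h : G.Adj u v) :
    (adjPairs G.Adj (insert v (S.erase u))).card + 2 * degreeIn G.Adj S u + 2
      = (adjPairs G.Adj S).card + 2 * degreeIn G.Adj S v := by
  have hS : (adjPairs G.Adj S).card
      = (adjPairs G.Adj (S.erase u)).card + 2 * degreeIn G.Adj (S.erase u) u := by
    rw [← card_adjPairs_insert G (notMem_erase u S), insert_erase hu]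
  have hu_deg : degreeIn G.Adj (S.erase u) u = degreeIn G.Adj S u := by
    simp [degreeIn, filter_erase]
  have hv_deg : degreeIn G.Adj (S.erase u) v + 1 = degreeIn G.Adj S v := by
    rw [degreeIn, filter_erase]
    exact card_erase_add_one (mem_filter.2 ⟨hu, h.symm⟩)
  rw [card_adjPairs_insert G fun h' => hv (mem_of_mem_erase h')]
  omega

end AdjPairs

section Grid

def gridGraph : SimpleGraph (ℤ × ℤ) where
  Adj p q := p - q = (1, 0) ∨ p - q = (-1, 0) ∨ p - q = (0, 1) ∨ p - q = (0, -1)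
  symm := ⟨fun ⟨a, b⟩ ⟨c, d⟩ h => by simp only [Prod.mk_sub_mk, Prod.mk.injEq] at h ⊢; omega⟩
  loopless := ⟨fun p h => by simp [Prod.ext_iff] at h⟩

theorem gridGraph_adj_iff {p q : ℤ × ℤ} :
    gridGraph.Adj p q ↔ q = p - (1, 0) ∨ q = p + (1, 0) ∨ q = p - (0, 1) ∨ q = p + (0, 1) := by
  obtain ⟨a, b⟩ := p; obtain ⟨c, d⟩ := q
  simp only [gridGraph, Prod.mk_sub_mk, Prod.mk_add_mk, Prod.mk.injEq]
  omega

theorem degreeIn_gridGraph (S : Finset (ℤ × ℤ)) (w : ℤ × ℤ) :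
    degreeIn gridGraph.Adj S w
      = (if w - (1, 0) ∈ S then 1 else 0) + (if w + (1, 0) ∈ S then 1 else 0)
        + (if w - (0, 1) ∈ S then 1 else 0) + (if w + (0, 1) ∈ S then 1 else 0) := by
  have hnbrs : S.filter (gridGraph.Adj w)
      = ({w - (1, 0), w + (1, 0), w - (0, 1), w + (0, 1)} : Finset (ℤ × ℤ)).filter (· ∈ S) := by
    ext q
    simp only [mem_filter, mem_insert, mem_singleton, gridGraph_adj_iff]
    tauto
  obtain ⟨a, b⟩ := w
  rw [degreeIn, hnbrs, card_filter, sum_insert (by simp [Prod.ext_iff]; omega),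
    sum_insert (by simp [Prod.ext_iff]), sum_insert (by simp [Prod.ext_iff]; omega), sum_singleton]
  ring

def gridSquare (n : ℕ) : Finset (ℤ × ℤ) := Ico 0 (n : ℤ) ×ˢ Ico 0 (n : ℤ)

theorem mem_gridSquare {n : ℕ} {p : ℤ × ℤ} :
    p ∈ gridSquare n ↔ 0 ≤ p.1 ∧ p.1 < n ∧ 0 ≤ p.2 ∧ p.2 < n := by
  simp [gridSquare, and_assoc]

theorem card_adjPairs_gridSquare (n : ℕ) :
    (adjPairs gridGraph.Adj (gridSquare n)).card = 4 * (n * (n - 1)) := by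
  simp only [card_adjPairs_eq_sum_degreeIn, degreeIn_gridGraph, sum_add_distrib, ← card_filter]
  have h₁ : (gridSquare n).filter (· - (1, 0) ∈ gridSquare n) = Ico 1 (n : ℤ) ×ˢ Ico 0 (n : ℤ) := by
    ext ⟨a, b⟩; simp [gridSquare]; omega
  have h₂ : (gridSquare n).filter (· + (1, 0) ∈ gridSquare n)
      = Ico 0 ((n : ℤ) - 1) ×ˢ Ico 0 (n : ℤ) := by
    ext ⟨a, b⟩; simp [gridSquare]; omega
  have h₃ : (gridSquare n).filter (· - (0, 1) ∈ gridSquare n) = Ico 0 (n : ℤ) ×ˢ Ico 1 (n : ℤ) := by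
    ext ⟨a, b⟩; simp [gridSquare]; omega
  have h₄ : (gridSquare n).filter (· + (0, 1) ∈ gridSquare n)
      = Ico 0 (n : ℤ) ×ˢ Ico 0 ((n : ℤ) - 1) := by
    ext ⟨a, b⟩; simp [gridSquare]; omega
  rw [h₁, h₂, h₃, h₄]
  simp only [card_product, Int.card_Ico]
  rcases n with _ | n
  · simp
  · have h : ((n + 1 : ℕ) : ℤ) - 1 = n := by push_cast; ring
    simp only [h, sub_zero, Int.toNat_natCast, Nat.add_sub_cancel]
    ring

theorem degreeIn_gridSquare_eq_one_of_adj {n : ℕ} {p q : ℤ × ℤ} (hp : p ∈ gridSquare n)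
    (hq : q ∉ gridSquare n) (h : gridGraph.Adj p q) :
    degreeIn gridGraph.Adj (gridSquare n) q = 1 := by
  obtain ⟨a, b⟩ := p; obtain ⟨c, d⟩ := q
  simp only [gridGraph, Prod.mk_sub_mk, Prod.mk.injEq] at h
  simp only [mem_gridSquare] at hp hq
  rw [degreeIn_gridGraph]
  simp only [Prod.mk_sub_mk, Prod.mk_add_mk, mem_gridSquare]
  split_ifs <;> omega

theorem degreeIn_gridSquare_eq_two_iff {n : ℕ} (hn : 2 ≤ n) {p : ℤ × ℤ} (hp : p ∈ gridSquare n) :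
    degreeIn gridGraph.Adj (gridSquare n) p = 2
      ↔ (p.1 = 0 ∨ p.1 = n - 1) ∧ (p.2 = 0 ∨ p.2 = n - 1) := by
  obtain ⟨a, b⟩ := p
  simp only [mem_gridSquare] at hp
  rw [degreeIn_gridGraph]
  simp only [Prod.mk_sub_mk, Prod.mk_add_mk, mem_gridSquare]
  split_ifs <;> omega

def cornerMoves (n : ℤ) : Finset ((ℤ × ℤ) × (ℤ × ℤ)) :=
  {((0, 0), (-1, 0)), ((0, 0), (0, -1)),
    ((n - 1, 0), (n, 0)), ((n - 1, 0), (n - 1, -1)),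
    ((0, n - 1), (-1, n - 1)), ((0, n - 1), (0, n)),
    ((n - 1, n - 1), (n, n - 1)), ((n - 1, n - 1), (n - 1, n))}

theorem mem_cornerMoves_iff {n : ℕ} (hn : 2 ≤ n) {p q : ℤ × ℤ} :
    (p, q) ∈ cornerMoves n ↔ p ∈ gridSquare n ∧ q ∉ gridSquare n ∧ gridGraph.Adj p q
      ∧ degreeIn gridGraph.Adj (gridSquare n) p = 2 := by
  constructor
  · intro h
    suffices p ∈ gridSquare n ∧ q ∉ gridSquare n ∧ gridGraph.Adj p q ∧
        (p.1 = 0 ∨ p.1 = n - 1) ∧ (p.2 = 0 ∨ p.2 = n - 1) from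
      ⟨this.1, this.2.1, this.2.2.1, (degreeIn_gridSquare_eq_two_iff hn this.1).2 this.2.2.2⟩
    simp only [cornerMoves, mem_insert, mem_singleton, Prod.mk.injEq] at h
    rcases h with ⟨rfl, rfl⟩ | ⟨rfl, rfl⟩ | ⟨rfl, rfl⟩ | ⟨rfl, rfl⟩ | ⟨rfl, rfl⟩ | ⟨rfl, rfl⟩ |
      ⟨rfl, rfl⟩ | ⟨rfl, rfl⟩ <;> simp [mem_gridSquare, gridGraph] <;> omega
  · rintro ⟨hp, hq, hadj, hdeg⟩
    rw [degreeIn_gridSquare_eq_two_iff hn hp] at hdeg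
    obtain ⟨a, b⟩ := p
    simp only [mem_gridSquare] at hp
    rcases gridGraph_adj_iff.1 hadj with rfl | rfl | rfl | rfl <;>
      simp only [mem_gridSquare, Prod.mk_sub_mk, Prod.mk_add_mk] at hq <;>
      rcases hdeg with ⟨rfl | rfl, rfl | rfl⟩ <;>
      simp [cornerMoves] <;> omega

theorem card_cornerMoves {n : ℕ} (hn : 2 ≤ n) : (cornerMoves n).card = 8 := by
  rw [cornerMoves]
  repeat rw [card_insert_of_notMem]
  all_goals simp [Prod.ext_iff] <;> omega

end Grid

section Swap

variable {L : ℕ}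

theorem torusAdj_symm {u v : Site L} (h : torusAdj L u v) : torusAdj L v u := by
  rw [torusAdj, ← neg_sub u v] at *
  rcases h with h | h | h | h <;> simp [h]

theorem swapConf_comm (η : Config L) (u v : Site L) : swapConf L η u v = swapConf L η v u := by
  funext z
  by_cases hu : z = u <;> by_cases hv : z = v <;> simp_all [swapConf]

theorem swapConf_eq_self_iff {η : Config L} {u v : Site L} : swapConf L η u v = η ↔ η u = η v := by
  refine ⟨fun h => ?_, fun h => funext fun z => ?_⟩
  · by_cases hvu : v = u
    · rw [hvu]
    · simpa [swapConf, hvu] using congrFun h v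
  · by_cases hu : z = u <;> by_cases hv : z = v <;> simp_all [swapConf]

theorem eq_and_eq_of_swapConf_eq {η : Config L} {u v u' v' : Site L} (hu : η u = true)
    (hv : η v = false) (hv' : η v' = false) (h : swapConf L η u v = swapConf L η u' v') :
    u = u' ∧ v = v' := by
  have hvu : v ≠ u := by rintro rfl; simp_all
  have hat_u := congrFun h u
  have hat_v := congrFun h v
  simp only [swapConf, if_neg hvu] at hat_u hat_v
  constructor
  · by_contra hne
    split_ifs at hat_u <;> simp_all
  · by_contra hne
    split_ifs at hat_v <;> simp_all

theorem occupied_swapConf [NeZero L] {η : Config L} {u v : Site L} (hu : η u = true)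
    (hv : η v = false) : occupied L (swapConf L η u v) = insert v ((occupied L η).erase u) := by
  ext z
  by_cases hzu : z = u <;> by_cases hzv : z = v <;> simp_all [occupied, swapConf]

theorem occupied_squareConf [NeZero L] (n : ℕ) (x : Site L) :
    occupied L (squareConf L n x) = squareSet L n x := by
  ext z
  simp [occupied, squareConf]

end Swap

section Torus

variable {L : ℕ}

theorem intCast_eq_intCast_iff_of_abs_sub_lt {a b : ℤ} (h : |b - a| < L) :
    (a : ZMod L) = b ↔ a = b := by
  rw [ZMod.intCast_eq_intCast_iff_dvd_sub]
  refine ⟨fun hdvd => ?_, fun hab => by simp [hab]⟩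
  linarith [Int.eq_zero_of_abs_lt_dvd hdvd h]

def torusCast (L : ℕ) : ℤ × ℤ →+ Site L :=
  (Int.castAddHom (ZMod L)).prodMap (Int.castAddHom (ZMod L))

theorem torusCast_apply (d : ℤ × ℤ) : torusCast L d = ((d.1 : ZMod L), (d.2 : ZMod L)) := rfl

theorem torusCast_eq_torusCast_iff {d e : ℤ × ℤ} (h₁ : |e.1 - d.1| < L) (h₂ : |e.2 - d.2| < L) :
    torusCast L d = torusCast L e ↔ d = e := by
  rw [torusCast_apply, torusCast_apply, Prod.mk.injEq, intCast_eq_intCast_iff_of_abs_sub_lt h₁,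
    intCast_eq_intCast_iff_of_abs_sub_lt h₂, Prod.ext_iff]

def embed (L : ℕ) (x : Site L) (p : ℤ × ℤ) : Site L := x + torusCast L p

theorem embed_sub_embed (x : Site L) (p q : ℤ × ℤ) :
    embed L x p - embed L x q = torusCast L (p - q) := by
  rw [embed, embed, add_sub_add_left_eq_sub, map_sub]

theorem embed_sub (x : Site L) (p c : ℤ × ℤ) :
    embed L x (p - c) = embed L x p - torusCast L c := by
  rw [embed, embed, map_sub, add_sub_assoc]

def thickSquare (n : ℕ) : Finset (ℤ × ℤ) := Icc (-1) (n : ℤ) ×ˢ Icc (-1) (n : ℤ)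

theorem mem_thickSquare {n : ℕ} {p : ℤ × ℤ} :
    p ∈ thickSquare n ↔ -1 ≤ p.1 ∧ p.1 ≤ n ∧ -1 ≤ p.2 ∧ p.2 ≤ n := by
  simp [thickSquare, and_assoc]

theorem gridSquare_subset_thickSquare (n : ℕ) : gridSquare n ⊆ thickSquare n := by
  intro p hp
  rw [mem_gridSquare] at hp
  rw [mem_thickSquare]
  omega

theorem mem_thickSquare_of_adj {n : ℕ} {p q : ℤ × ℤ} (hp : p ∈ gridSquare n)
    (h : gridGraph.Adj p q) : q ∈ thickSquare n := by
  rw [mem_gridSquare] at hp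
  rw [mem_thickSquare]
  rcases gridGraph_adj_iff.1 h with rfl | rfl | rfl | rfl <;> simp <;> omega

theorem embed_injOn {n : ℕ} (hL : n + 1 < L) (x : Site L) :
    Set.InjOn (embed L x) (thickSquare n) := by
  intro p hp q hq h
  rw [mem_coe, mem_thickSquare] at hp hq
  rwa [← sub_eq_zero, embed_sub_embed, ← map_zero (torusCast L), torusCast_eq_torusCast_iff,
    sub_eq_zero] at h
  all_goals simp only [Prod.fst_zero, Prod.snd_zero, Prod.fst_sub, Prod.snd_sub, abs_lt]; omega

theorem torusAdj_embed_iff {n : ℕ} (hL : n + 2 < L) (x : Site L) {p q : ℤ × ℤ}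
    (hp : p ∈ thickSquare n) (hq : q ∈ thickSquare n) :
    torusAdj L (embed L x p) (embed L x q) ↔ gridGraph.Adj p q := by
  rw [mem_thickSquare] at hp hq
  have hunit : ∀ c : ℤ × ℤ, |c.1| ≤ 1 → |c.2| ≤ 1 →
      (embed L x p - embed L x q = torusCast L c ↔ p - q = c) := by
    intro c h₁ h₂
    rw [abs_le] at h₁ h₂
    rw [embed_sub_embed, torusCast_eq_torusCast_iff] <;>
      simp only [Prod.fst_sub, Prod.snd_sub, abs_lt] <;> omega
  have hcast : ∀ a b : ℤ, ((a : ZMod L), (b : ZMod L)) = torusCast L (a, b) := fun _ _ => rfl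
  simp only [torusAdj, gridGraph]
  rw [← Int.cast_one, ← Int.cast_zero, ← Int.cast_neg, hcast, hcast, hcast, hcast,
    hunit, hunit, hunit, hunit] <;> norm_num

theorem exists_adj_embed_eq_of_torusAdj {x : Site L} {p : ℤ × ℤ} {v : Site L}
    (h : torusAdj L (embed L x p) v) : ∃ q, gridGraph.Adj p q ∧ embed L x q = v := by
  obtain ⟨c, hc, hcv⟩ : ∃ c : ℤ × ℤ, gridGraph.Adj c 0 ∧ embed L x p - v = torusCast L c := by
    rcases h with h | h | h | h
    exacts [⟨(1, 0), by simp [gridGraph], by simp [h, torusCast_apply]⟩,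
      ⟨(-1, 0), by simp [gridGraph], by simp [h, torusCast_apply]⟩,
      ⟨(0, 1), by simp [gridGraph], by simp [h, torusCast_apply]⟩,
      ⟨(0, -1), by simp [gridGraph], by simp [h, torusCast_apply]⟩]
  refine ⟨p - c, by simpa [gridGraph] using hc, ?_⟩
  rw [embed_sub, ← hcv, sub_sub_cancel]

theorem squareSet_eq_image (n : ℕ) (x : Site L) :
    squareSet L n x = (gridSquare n).image (embed L x) := by
  ext z
  simp only [squareSet, mem_image, mem_product, mem_range, mem_gridSquare, Prod.exists]
  constructor
  · rintro ⟨a, b, ⟨ha, hb⟩, rfl⟩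
    exact ⟨a, b, by omega, by simp [embed, torusCast_apply]⟩
  · rintro ⟨a, b, hab, rfl⟩
    refine ⟨a.toNat, b.toNat, by omega, ?_⟩
    simp [embed, torusCast_apply, hab.1, hab.2.2.1]

theorem squareConf_embed {n : ℕ} (hL : n + 1 < L) {x : Site L} {p : ℤ × ℤ}
    (hp : p ∈ thickSquare n) : squareConf L n x (embed L x p) = decide (p ∈ gridSquare n) := by
  simp only [squareConf, decide_eq_decide]
  rw [squareSet_eq_image, ← mem_coe, coe_image,
    (embed_injOn hL x).mem_image_iff (gridSquare_subset_thickSquare n) hp, mem_coe]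

end Torus

section Square

variable {L n : ℕ} {x : Site L}

theorem confH_swapConf_squareConf [NeZero L] (hL : n + 2 < L) {p q : ℤ × ℤ}
    (hp : p ∈ gridSquare n) (hq : q ∉ gridSquare n) (hpq : gridGraph.Adj p q) :
    confH L (swapConf L (squareConf L n x) (embed L x p) (embed L x q))
      = -(2 * (n : ℤ) * ((n : ℤ) - 1)) + degreeIn gridGraph.Adj (gridSquare n) p := by
  have hL' : n + 1 < L := by omega
  have hcount := card_adjPairs_insert_erase gridGraph hp hq hpq
  rw [card_adjPairs_gridSquare, degreeIn_gridSquare_eq_one_of_adj hp hq hpq] at hcount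
  set T := insert q ((gridSquare n).erase p)
  have hT : T ⊆ thickSquare n :=
    insert_subset (mem_thickSquare_of_adj hp hpq)
      ((erase_subset p _).trans (gridSquare_subset_thickSquare n))
  have hp' := gridSquare_subset_thickSquare n hp
  have hocc : occupied L (swapConf L (squareConf L n x) (embed L x p) (embed L x q))
      = T.image (embed L x) := by
    rw [occupied_swapConf (by simp [squareConf_embed hL' hp', hp])
        (by simp [squareConf_embed hL' (mem_thickSquare_of_adj hp hpq), hq]),
      occupied_squareConf, squareSet_eq_image, image_insert,
      ← image_erase_of_injOn ((embed_injOn hL' x).mono (gridSquare_subset_thickSquare n)) hp]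
  have htransfer : (adjPairs (torusAdj L) (T.image (embed L x))).card
      = (adjPairs gridGraph.Adj T).card :=
    card_adjPairs_image ((embed_injOn hL' x).mono hT)
      fun p hp q hq => torusAdj_embed_iff hL x (hT hp) (hT hq)
  have hN : ((n * (n - 1) : ℕ) : ℤ) = n * ((n : ℤ) - 1) := by cases n <;> simp
  rw [confH, torusE, hocc, ← adjPairs, htransfer, mul_assoc, ← hN]
  generalize n * (n - 1) = N at hcount
  omega

theorem setOf_swapConf_squareConf_eq_image [NeZero L] (hn : 2 ≤ n) (hL : n + 2 < L) :
    {ξ : Config L |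
        (∃ u v : Site L, torusAdj L u v ∧ ξ = swapConf L (squareConf L n x) u v)
        ∧ ξ ≠ squareConf L n x
        ∧ confH L ξ = -(2 * (n : ℤ) * ((n : ℤ) - 1)) + 2}
      = ↑((cornerMoves n).image fun m =>
          swapConf L (squareConf L n x) (embed L x m.1) (embed L x m.2)) := by
  have hL' : n + 1 < L := by omega
  ext ξ
  simp only [Set.mem_ofPred_eq, coe_image, Set.mem_image, mem_coe]
  constructor
  · rintro ⟨⟨u, v, huv, rfl⟩, hne, hH⟩
    rw [Ne, swapConf_eq_self_iff] at hne
    wlog hu : squareConf L n x u = true generalizing u v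
    · obtain ⟨m, hm, h⟩ := this v u (torusAdj_symm huv) (Ne.symm hne)
        (by rwa [swapConf_comm]) (by simpa [hu] using hne)
      exact ⟨m, hm, h.trans (swapConf_comm _ _ _)⟩
    have hv : squareConf L n x v = false := by simpa [hu] using Ne.symm hne
    obtain ⟨p, hp, rfl⟩ : ∃ p ∈ gridSquare n, embed L x p = u := by
      simpa [squareConf, squareSet_eq_image] using hu
    obtain ⟨q, hpq, rfl⟩ := exists_adj_embed_eq_of_torusAdj huv
    have hq : q ∉ gridSquare n := by
      simpa [squareConf_embed hL' (mem_thickSquare_of_adj hp hpq)] using hv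
    rw [confH_swapConf_squareConf hL hp hq hpq] at hH
    exact ⟨(p, q), (mem_cornerMoves_iff hn).2 ⟨hp, hq, hpq, by omega⟩, rfl⟩
  · rintro ⟨⟨p, q⟩, hm, rfl⟩
    obtain ⟨hp, hq, hpq, hdeg⟩ := (mem_cornerMoves_iff hn).1 hm
    have hp' := gridSquare_subset_thickSquare n hp
    have hq' := mem_thickSquare_of_adj hp hpq
    refine ⟨⟨_, _, (torusAdj_embed_iff hL x hp' hq').2 hpq, rfl⟩, ?_, ?_⟩
    · simp [swapConf_eq_self_iff, squareConf_embed hL' hp', squareConf_embed hL' hq', hp, hq]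
    · rw [confH_swapConf_squareConf hL hp hq hpq, hdeg]
      push_cast
      ring

theorem injOn_swapConf_squareConf_cornerMoves (hn : 2 ≤ n) (hL : n + 1 < L) :
    Set.InjOn (fun m : (ℤ × ℤ) × (ℤ × ℤ) =>
      swapConf L (squareConf L n x) (embed L x m.1) (embed L x m.2)) (cornerMoves n) := by
  rintro ⟨p, q⟩ hm ⟨p', q'⟩ hm' h
  obtain ⟨hp, hq, hpq, -⟩ := (mem_cornerMoves_iff hn).1 hm
  obtain ⟨hp', hq', hpq', -⟩ := (mem_cornerMoves_iff hn).1 hm'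
  have hP := gridSquare_subset_thickSquare n hp
  have hP' := gridSquare_subset_thickSquare n hp'
  have hQ := mem_thickSquare_of_adj hp hpq
  have hQ' := mem_thickSquare_of_adj hp' hpq'
  obtain ⟨h₁, h₂⟩ := eq_and_eq_of_swapConf_eq (by simp [squareConf_embed hL hP, hp])
    (by simp [squareConf_embed hL hQ, hq]) (by simp [squareConf_embed hL hQ', hq']) h
  rw [embed_injOn hL x hP hP' h₁, embed_injOn hL x hQ hQ' h₂]

end Square

/-- the set of configurations obtained from the square configuration
`η^x` by one exchange across adjacent sites, different from `η^x` and of energy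
`−2n(n−1) + 2`, has exactly `8` elements. -/
theorem square_neighbours_card (n L : ℕ) [NeZero L] (hn : 4 ≤ n) (hL : 2 * n < L)
    (x : Site L) :
    {ξ : Config L |
        (∃ u v : Site L, torusAdj L u v ∧ ξ = swapConf L (squareConf L n x) u v)
        ∧ ξ ≠ squareConf L n x
        ∧ confH L ξ = -(2 * (n : ℤ) * ((n : ℤ) - 1)) + 2}.ncard = 8 := by
  have hn₂ : 2 ≤ n := by omega
  rw [setOf_swapConf_squareConf_eq_image hn₂ (by omega), Set.ncard_coe_finset,
    card_image_of_injOn (injOn_swapConf_squareConf_cornerMoves hn₂ (by omega)),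
    card_cornerMoves hn₂]
end
end
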